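/- arXiv:1105.4657 — 4 statements merged into one kernel-verified Lean document; each statement's English description precedes it below -/
import Mathlib

section
/- (Gentle Measurement Lemma) Let ρ be a positive semidefinite operator with Tr ρ ≤ 1 on a finite-dimensional Hilbert space, and let X be an operator with 0 ≤ X ≤ I such that Tr[X ρ] ≥ 1 − ε for some ε ∈ [0,1]. Then ‖√X ρ √X − ρ‖₁ ≤ 2√ε. -/
/-!
With `S = √X`, the difference splits as `SρS - ρ = Sρ(S - 1) + (S - 1)ρ`. The trace norm of the
Hermitian matrix `Δ = SρS - ρ` is `Re Tr(UΔ)` for the unitary `U = sign Δ`, and Cauchy–Schwarz for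
the semi-inner product `(x, y) ↦ Tr(yρxᴴ)` bounds the two terms by `√Tr((S - 1)ρ(S - 1))` times
`√Tr(SρS) ≤ 1` and `√Tr ρ ≤ 1` respectively. Finally `0 ≤ X ≤ 1` forces `X ≤ S`, whence
`Tr((S - 1)ρ(S - 1)) = Tr(Xρ) - 2 Tr(Sρ) + Tr ρ ≤ Tr ρ - Tr(Xρ) ≤ ε`.
-/

open scoped ComplexOrder

/-- The matrix square root `Matrix.PosSemidef.sqrt` as Mathlib (Dec 2024) defined it; removed since. -/
noncomputable def Matrix.PosSemidef.sqrt {n : Type*} {𝕜 : Type*} [Fintype n] [RCLike 𝕜]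
    [DecidableEq n] {A : Matrix n n 𝕜} (hA : A.PosSemidef) : Matrix n n 𝕜 :=
  (hA.1.eigenvectorUnitary : Matrix n n 𝕜) *
    Matrix.diagonal (fun i => ((Real.sqrt (hA.1.eigenvalues i) : ℝ) : 𝕜)) *
    (star hA.1.eigenvectorUnitary : Matrix n n 𝕜)

/-- The trace norm `‖M‖₁ = Tr √(MᴴM)`. -/
noncomputable def traceNorm {n : Type*} [Fintype n] [DecidableEq n]
    (M : Matrix n n ℂ) : ℝ :=
  ((Matrix.posSemidef_conjTranspose_mul_self M).sqrt).trace.re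

namespace CFC

variable {A : Type*} [PartialOrder A] [Ring A] [StarRing A] [TopologicalSpace A]
  [StarOrderedRing A] [Algebra ℝ A] [ContinuousFunctionalCalculus ℝ A IsSelfAdjoint]
  [NonnegSpectrumClass ℝ A] [IsSemitopologicalRing A] [T2Space A]

lemma le_sqrt_of_le_one {a : A} (ha₀ : 0 ≤ a) (ha₁ : a ≤ 1) : a ≤ sqrt a := by
  have hspec : ∀ x ∈ spectrum ℝ a, x ≤ 1 := by
    simpa using (le_algebraMap_iff_spectrum_le (r := (1 : ℝ)) (a := a)).mp (by simpa using ha₁)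
  rw [sqrt_eq_real_sqrt a, cfcₙ_eq_cfc]
  conv_lhs => rw [← cfc_id' ℝ a]
  rw [cfc_le_iff (fun x => x) Real.sqrt a]
  intro x hx
  have hx₀ : 0 ≤ x := spectrum_nonneg_of_nonneg ha₀ hx
  exact Real.le_sqrt_of_sq_le (by nlinarith [hspec x hx])

end CFC

open scoped MatrixOrder

namespace Matrix

variable {n 𝕜 : Type*} [Fintype n] [RCLike 𝕜]

lemma PosSemidef.re_trace_mul_mul_conjTranspose_le {M : Matrix n n 𝕜} (hM : M.PosSemidef)
    (x y : Matrix n n 𝕜) :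
    RCLike.re (y * M * xᴴ).trace ≤
      √(RCLike.re (x * M * xᴴ).trace) * √(RCLike.re (y * M * yᴴ).trace) := by
  let _ := M.toMatrixSeminormedAddCommGroup hM
  let _ := M.toMatrixInnerProductSpace hM
  have := re_inner_le_norm (𝕜 := 𝕜) x y
  rwa [norm_eq_sqrt_re_inner (𝕜 := 𝕜) x, norm_eq_sqrt_re_inner (𝕜 := 𝕜) y] at this

variable [DecidableEq n]

lemma PosSemidef.sqrt_eq_cfcSqrt {A : Matrix n n 𝕜} (hA : A.PosSemidef) :
    hA.sqrt = CFC.sqrt A := by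
  rw [CFC.sqrt_eq_cfc, cfc_nnreal_eq_real _ A (nonneg_iff_posSemidef.mpr hA), hA.1.cfc_eq]
  simp only [IsHermitian.cfc, Unitary.conjStarAlgAut_apply, PosSemidef.sqrt]
  congr 3
  ext i
  simp [Real.coe_toNNReal', max_eq_left (hA.eigenvalues_nonneg i)]

lemma PosSemidef.re_trace_unitary_mul_le {M U : Matrix n n 𝕜} (hM : M.PosSemidef)
    (hU : U ∈ unitaryGroup n 𝕜) (x y : Matrix n n 𝕜) :
    RCLike.re (U * y * M * xᴴ).trace ≤
      √(RCLike.re (x * M * xᴴ).trace) * √(RCLike.re (y * M * yᴴ).trace) := by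
  have hconj : (U * y * M * (U * y)ᴴ).trace = (y * M * yᴴ).trace := by
    rw [show U * y * M * (U * y)ᴴ = U * (y * M * yᴴ) * star U by
        rw [conjTranspose_mul, star_eq_conjTranspose]; noncomm_ring,
      trace_mul_cycle, mem_unitaryGroup_iff'.mp hU, one_mul]
  simpa only [hconj] using hM.re_trace_mul_mul_conjTranspose_le x (U * y)

lemma trace_mul_le_trace_mul_of_le {P Q ρ : Matrix n n 𝕜} (hPQ : P ≤ Q) (hρ : ρ.PosSemidef) :
    (P * ρ).trace ≤ (Q * ρ).trace := by
  set R := CFC.sqrt (Q - P)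
  have hR : Rᴴ = R := (CFC.sqrt_nonneg (Q - P)).isSelfAdjoint
  have hRR : R * R = Q - P := CFC.sqrt_mul_sqrt_self (Q - P) (sub_nonneg.mpr hPQ)
  have hconj : (R * ρ * R).PosSemidef := by simpa [hR] using hρ.mul_mul_conjTranspose_same R
  rw [← sub_nonneg, ← trace_sub, ← sub_mul, ← hRR, mul_assoc, trace_mul_comm]
  exact hconj.trace_nonneg

lemma re_trace_sqrt_sub_one_mul_mul_le {X ρ : Matrix n n 𝕜} (hX₀ : 0 ≤ X) (hX₁ : X ≤ 1)
    (hρ : ρ.PosSemidef) :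
    RCLike.re ((CFC.sqrt X - 1) * ρ * (CFC.sqrt X - 1)).trace ≤
      RCLike.re ρ.trace - RCLike.re (X * ρ).trace := by
  set S := CFC.sqrt X
  have hSS : S * S = X := CFC.sqrt_mul_sqrt_self X
  have hXS : RCLike.re (X * ρ).trace ≤ RCLike.re (S * ρ).trace :=
    (RCLike.le_iff_re_im.mp (trace_mul_le_trace_mul_of_le (CFC.le_sqrt_of_le_one hX₀ hX₁) hρ)).1
  have hexpand : ((S - 1) * ρ * (S - 1)).trace =
      (X * ρ).trace - (S * ρ).trace - (S * ρ).trace + ρ.trace := by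
    rw [show (S - 1) * ρ * (S - 1) = S * ρ * S - S * ρ - ρ * S + ρ by noncomm_ring,
      trace_add, trace_sub, trace_sub, trace_mul_cycle, hSS, trace_mul_comm ρ S]
  rw [hexpand, map_add, map_sub, map_sub]
  linarith

lemma IsHermitian.exists_mem_unitaryGroup_traceNorm_eq {M : Matrix n n ℂ} (hM : M.IsHermitian) :
    ∃ U ∈ unitaryGroup n ℂ, traceNorm M = (U * M).trace.re := by
  -- `U = sign M`, so that `U * M = |M| = √(Mᴴ * M)`
  have hcont (f : ℝ → ℝ) : ContinuousOn f (spectrum ℝ M) := M.finite_real_spectrum.continuousOn f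
  set s : ℝ → ℝ := fun x => if 0 ≤ x then 1 else -1
  refine ⟨cfc s M, ?_, ?_⟩
  · rw [mem_unitaryGroup_iff', (cfc_predicate s M).star_eq, ← cfc_mul s s M (hcont s) (hcont s),
      ← cfc_one ℝ M]
    refine cfc_congr fun (x : ℝ) _ => ?_
    by_cases hx : 0 ≤ x <;> simp [s, hx]
  · have habs : cfc s M * M = cfc (fun x : ℝ => |x|) M := by
      nth_rw 2 [← cfc_id' ℝ M]
      rw [← cfc_mul s (fun x : ℝ => x) M (hcont s)]
      refine cfc_congr fun (x : ℝ) _ => ?_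
      by_cases hx : 0 ≤ x
      · simp [s, hx, abs_of_nonneg hx]
      · simp [s, hx, abs_of_neg (not_le.mp hx)]
    have hsqrt : CFC.sqrt (Mᴴ * M) = cfc (fun x : ℝ => |x|) M := by
      refine CFC.sqrt_unique ?_ (cfc_nonneg fun x _ => abs_nonneg x)
      rw [← cfc_mul (fun x : ℝ => |x|) (fun x : ℝ => |x|) M, hM.eq]
      conv_rhs => rw [← cfc_id' ℝ M, ← cfc_mul (fun x : ℝ => x) (fun x : ℝ => x) M]
      exact cfc_congr fun x _ => abs_mul_abs_self x
    rw [traceNorm, PosSemidef.sqrt_eq_cfcSqrt, hsqrt, habs]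

lemma traceNorm_mul_mul_sub_le {S ρ : Matrix n n ℂ} (hS : S.IsHermitian) (hρ : ρ.PosSemidef) :
    traceNorm (S * ρ * S - ρ) ≤
      √((S - 1) * ρ * (S - 1)).trace.re * (√(S * ρ * S).trace.re + √ρ.trace.re) := by
  have hherm : (S * ρ * S - ρ).IsHermitian := by
    simpa [hS.eq] using (hρ.mul_mul_conjTranspose_same S).isHermitian.sub hρ.isHermitian
  obtain ⟨U, hU, hnorm⟩ := hherm.exists_mem_unitaryGroup_traceNorm_eq
  have hsplit : U * (S * ρ * S - ρ) = U * S * ρ * (S - 1) + U * (S - 1) * ρ := by noncomm_ring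
  have h₁ := hρ.re_trace_unitary_mul_le hU (S - 1) S
  have h₂ := hρ.re_trace_unitary_mul_le hU 1 (S - 1)
  simp only [conjTranspose_sub, conjTranspose_one, hS.eq, one_mul, mul_one,
    RCLike.re_to_complex] at h₁ h₂
  rw [hnorm, hsplit, trace_add, Complex.add_re, mul_add]
  linarith

end Matrix

open Matrix in
theorem gentle_measurement_general {n : Type*} [Fintype n] [DecidableEq n]
    (ρ X : Matrix n n ℂ) (hρ : ρ.PosSemidef) (hρtr : ρ.trace.re ≤ 1)
    (hX : X.PosSemidef) (hX1 : ((1 : Matrix n n ℂ) - X).PosSemidef)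
    (ε : ℝ)
    (h : 1 - ε ≤ ((X * ρ).trace).re) :
    traceNorm (hX.sqrt * ρ * hX.sqrt - ρ) ≤ 2 * Real.sqrt ε := by
  have hX₀ : 0 ≤ X := nonneg_iff_posSemidef.mpr hX
  have hX₁ : X ≤ 1 := hX1
  rw [hX.sqrt_eq_cfcSqrt]
  set S := CFC.sqrt X
  have hdefect : ((S - 1) * ρ * (S - 1)).trace.re ≤ ε := by
    have := re_trace_sqrt_sub_one_mul_mul_le hX₀ hX₁ hρ
    simp only [RCLike.re_to_complex] at this
    linarith
  have hsandwich : (S * ρ * S).trace.re ≤ 1 := by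
    have hXρ := (Complex.le_def.mp (trace_mul_le_trace_mul_of_le hX₁ hρ)).1
    rw [one_mul] at hXρ
    rw [trace_mul_cycle, CFC.sqrt_mul_sqrt_self X]
    linarith
  calc _ ≤ √((S - 1) * ρ * (S - 1)).trace.re * (√(S * ρ * S).trace.re + √ρ.trace.re) :=
        traceNorm_mul_mul_sub_le (CFC.sqrt_nonneg X).isSelfAdjoint hρ
    _ ≤ √ε * (√1 + √1) := by gcongr
    _ = 2 * √ε := by rw [Real.sqrt_one]; ring

/-- (Gentle Measurement Lemma) If `ρ ≥ 0` has `Tr ρ ≤ 1`, `0 ≤ X ≤ I`, and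
`Tr[X ρ] ≥ 1 − ε` for some `ε ∈ [0,1]`, then `‖√X ρ √X − ρ‖₁ ≤ 2√ε`. -/
theorem gentle_measurement {n : Type*} [Fintype n] [DecidableEq n]
    (ρ X : Matrix n n ℂ) (hρ : ρ.PosSemidef) (hρtr : ρ.trace.re ≤ 1)
    (hX : X.PosSemidef) (hX1 : ((1 : Matrix n n ℂ) - X).PosSemidef)
    (ε : ℝ) (hε0 : 0 ≤ ε) (hε1 : ε ≤ 1)
    (h : 1 - ε ≤ ((X * ρ).trace).re) :
    traceNorm (hX.sqrt * ρ * hX.sqrt - ρ) ≤ 2 * Real.sqrt ε :=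
  gentle_measurement_general ρ X hρ hρtr hX hX1 ε h
end

section
/- Let ρ be a state on X ⊗ Y and let Π_X, Π_Y be orthogonal projectors on X and Y respectively. Define Ω = (Π_X ⊗ Π_Y) ρ (Π_X ⊗ Π_Y). Then the partial trace Tr_Y Ω satisfies Tr_Y Ω ≤ Π_X (Tr_Y ρ) Π_X as positive semidefinite operators. -/
open scoped Kronecker ComplexOrder

/-- The partial trace over the second tensor factor:
`(Tr_Y M) i j = ∑ k, M (i,k) (j,k)`. -/
noncomputable def ptraceSnd {x y : Type*} [Fintype y]
    (M : Matrix (x × y) (x × y) ℂ) : Matrix x x ℂ :=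
  Matrix.of fun i j => ∑ k, M (i, k) (j, k)

/-! With `Q = 1 - Π_Y`, cyclicity of `Tr_Y` in the `Y` factor gives, for idempotent `Π_Y`,
`Tr_Y σ = Tr_Y ((1 ⊗ Π_Y) σ (1 ⊗ Π_Y)) + Tr_Y ((1 ⊗ Q) σ (1 ⊗ Q))`. Apply this to
`σ = (Π_X ⊗ 1) ρ (Π_X ⊗ 1)`, whose partial trace is `Π_X (Tr_Y ρ) Π_X`: the difference in
question is the second term, which is positive because `Tr_Y` is a sum of compressions `Vₖᴴ (·) Vₖ`
along the isometries `Vₖ : v ↦ v ⊗ eₖ`. -/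

open Matrix

lemma Matrix.IsHermitian.kronecker {R l m : Type*} [CommMagma R] [StarMul R]
    {A : Matrix l l R} {B : Matrix m m R} (hA : A.IsHermitian) (hB : B.IsHermitian) :
    (A ⊗ₖ B).IsHermitian := by
  rw [IsHermitian, conjTranspose_kronecker, hA.eq, hB.eq]

lemma ptraceSnd_add {x y : Type*} [Fintype y] (M N : Matrix (x × y) (x × y) ℂ) :
    ptraceSnd (M + N) = ptraceSnd M + ptraceSnd N := by
  ext i j
  simp [ptraceSnd, Finset.sum_add_distrib]

def tensorBasisVec (x : Type*) {y : Type*} [DecidableEq x] [DecidableEq y] (k : y) :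
    Matrix (x × y) x ℂ :=
  of fun p j => if p = (j, k) then 1 else 0

section

variable {x y : Type*} [Fintype x] [Fintype y]

lemma ptraceSnd_eq_sum_conjTranspose_mul_mul [DecidableEq x] [DecidableEq y]
    (M : Matrix (x × y) (x × y) ℂ) :
    ptraceSnd M = ∑ k : y, (tensorBasisVec x k)ᴴ * M * tensorBasisVec x k := by
  ext i j
  simp [ptraceSnd, tensorBasisVec, mul_apply, Matrix.sum_apply, Fintype.sum_prod_type,
    Prod.ext_iff, ite_and, apply_ite (starRingEnd ℂ), ite_mul]

lemma Matrix.PosSemidef.ptraceSnd {M : Matrix (x × y) (x × y) ℂ} (hM : M.PosSemidef) :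
    (ptraceSnd M).PosSemidef := by
  classical
  rw [ptraceSnd_eq_sum_conjTranspose_mul_mul]
  exact posSemidef_sum _ fun k _ => hM.conjTranspose_mul_mul_same _

lemma ptraceSnd_kronecker_one_mul [DecidableEq y] (A : Matrix x x ℂ)
    (M : Matrix (x × y) (x × y) ℂ) : ptraceSnd ((A ⊗ₖ 1) * M) = A * ptraceSnd M := by
  ext i j
  simp only [ptraceSnd, mul_apply, kroneckerMap_apply, one_apply, mul_ite, mul_one, mul_zero,
    ite_mul, zero_mul, Fintype.sum_prod_type, Finset.sum_ite_eq, Finset.mem_univ, if_true,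
    of_apply, Finset.mul_sum]
  exact Finset.sum_comm

lemma ptraceSnd_mul_kronecker_one [DecidableEq y] (M : Matrix (x × y) (x × y) ℂ)
    (A : Matrix x x ℂ) : ptraceSnd (M * (A ⊗ₖ 1)) = ptraceSnd M * A := by
  ext i j
  simp only [ptraceSnd, mul_apply, kroneckerMap_apply, one_apply, mul_ite, mul_one, mul_zero,
    Fintype.sum_prod_type, Finset.sum_ite_eq', Finset.mem_univ, if_true, of_apply,
    Finset.sum_mul]
  exact Finset.sum_comm

lemma ptraceSnd_one_kronecker_mul_comm [DecidableEq x] (B : Matrix y y ℂ)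
    (M : Matrix (x × y) (x × y) ℂ) :
    ptraceSnd ((1 ⊗ₖ B) * M) = ptraceSnd (M * (1 ⊗ₖ B)) := by
  ext i j
  simp only [ptraceSnd, mul_apply, kroneckerMap_apply, one_apply, ite_mul, one_mul, zero_mul,
    Fintype.sum_prod_type, Finset.sum_ite_irrel, Finset.sum_const_zero, Finset.sum_ite_eq,
    Finset.mem_univ, if_true, of_apply, mul_ite, mul_zero, Finset.sum_ite_eq']
  rw [Finset.sum_comm]
  simp_rw [mul_comm]

lemma ptraceSnd_kronecker_one_conj [DecidableEq y] (A : Matrix x x ℂ)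
    (M : Matrix (x × y) (x × y) ℂ) :
    ptraceSnd ((A ⊗ₖ 1) * M * (A ⊗ₖ 1)) = A * ptraceSnd M * A := by
  rw [ptraceSnd_mul_kronecker_one, ptraceSnd_kronecker_one_mul]

lemma ptraceSnd_one_kronecker_conj_of_idempotent [DecidableEq x] [DecidableEq y]
    {P : Matrix y y ℂ} (hP : P * P = P) (M : Matrix (x × y) (x × y) ℂ) :
    ptraceSnd ((1 ⊗ₖ P) * M * (1 ⊗ₖ P)) = ptraceSnd (M * (1 ⊗ₖ P)) := by
  rw [mul_assoc, ptraceSnd_one_kronecker_mul_comm, mul_assoc, ← mul_kronecker_mul, one_mul, hP]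

lemma ptraceSnd_eq_add_one_kronecker_conj [DecidableEq x] [DecidableEq y]
    {P : Matrix y y ℂ} (hP : P * P = P) (M : Matrix (x × y) (x × y) ℂ) :
    ptraceSnd M = ptraceSnd ((1 ⊗ₖ P) * M * (1 ⊗ₖ P)) +
      ptraceSnd ((1 ⊗ₖ (1 - P)) * M * (1 ⊗ₖ (1 - P))) := by
  have hQ : (1 - P) * (1 - P) = 1 - P := by
    simp [sub_mul, mul_sub, hP]
  rw [ptraceSnd_one_kronecker_conj_of_idempotent hP,
    ptraceSnd_one_kronecker_conj_of_idempotent hQ, ← ptraceSnd_add, ← mul_add, ← kronecker_add,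
    add_sub_cancel, one_kronecker_one, mul_one]

lemma posSemidef_ptraceSnd_sub_one_kronecker_conj [DecidableEq x] [DecidableEq y]
    {M : Matrix (x × y) (x × y) ℂ} (hM : M.PosSemidef) {P : Matrix y y ℂ}
    (hPherm : P.IsHermitian) (hPidem : P * P = P) :
    (ptraceSnd M - ptraceSnd ((1 ⊗ₖ P) * M * (1 ⊗ₖ P))).PosSemidef := by
  rw [ptraceSnd_eq_add_one_kronecker_conj hPidem M, add_sub_cancel_left]
  have hQ : ((1 : Matrix x x ℂ) ⊗ₖ (1 - P)).IsHermitian :=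
    isHermitian_one.kronecker (isHermitian_one.sub hPherm)
  have hMQ := hM.conjTranspose_mul_mul_same ((1 : Matrix x x ℂ) ⊗ₖ (1 - P))
  rw [hQ.eq] at hMQ
  exact hMQ.ptraceSnd

end

theorem ptrace_projected_le_general {x y : Type*} [Fintype x] [Fintype y] [DecidableEq x]
    [DecidableEq y] (ρ : Matrix (x × y) (x × y) ℂ) (hρ : ρ.PosSemidef)
    (PX : Matrix x x ℂ) (PY : Matrix y y ℂ)
    (hXherm : PX.IsHermitian)
    (hYherm : PY.IsHermitian) (hYidem : PY * PY = PY) :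
    (PX * ptraceSnd ρ * PX -
      ptraceSnd ((PX ⊗ₖ PY) * ρ * (PX ⊗ₖ PY))).PosSemidef := by
  have hσ : ((PX ⊗ₖ 1) * ρ * (PX ⊗ₖ 1 : Matrix (x × y) (x × y) ℂ)).PosSemidef := by
    have := hρ.conjTranspose_mul_mul_same (PX ⊗ₖ (1 : Matrix y y ℂ))
    rwa [(hXherm.kronecker isHermitian_one).eq] at this
  have hΩ : (PX ⊗ₖ PY) * ρ * (PX ⊗ₖ PY) =
      (1 ⊗ₖ PY) * ((PX ⊗ₖ 1) * ρ * (PX ⊗ₖ 1)) * (1 ⊗ₖ PY) := by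
    have hPXPY : PX ⊗ₖ PY = (PX ⊗ₖ 1) * (1 ⊗ₖ PY) := by
      rw [← mul_kronecker_mul, mul_one, one_mul]
    have hPYPX : PX ⊗ₖ PY = (1 ⊗ₖ PY) * (PX ⊗ₖ 1) := by
      rw [← mul_kronecker_mul, mul_one, one_mul]
    nth_rw 1 [hPYPX]
    rw [hPXPY]
    simp only [mul_assoc]
  rw [← ptraceSnd_kronecker_one_conj, hΩ]
  exact posSemidef_ptraceSnd_sub_one_kronecker_conj hσ hYherm hYidem

/-- Let `ρ ≥ 0` on `X ⊗ Y` and let `Π_X`, `Π_Y` be orthogonal projectors on `X` and `Y`.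
With `Ω = (Π_X ⊗ Π_Y) ρ (Π_X ⊗ Π_Y)`, one has `Tr_Y Ω ≤ Π_X (Tr_Y ρ) Π_X`. -/
theorem ptrace_projected_le {x y : Type*} [Fintype x] [Fintype y] [DecidableEq x]
    [DecidableEq y] (ρ : Matrix (x × y) (x × y) ℂ) (hρ : ρ.PosSemidef)
    (PX : Matrix x x ℂ) (PY : Matrix y y ℂ)
    (hXherm : PX.IsHermitian) (hXidem : PX * PX = PX)
    (hYherm : PY.IsHermitian) (hYidem : PY * PY = PY) :
    (PX * ptraceSnd ρ * PX -
      ptraceSnd ((PX ⊗ₖ PY) * ρ * (PX ⊗ₖ PY))).PosSemidef :=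
  ptrace_projected_le_general ρ hρ PX PY hXherm hYherm hYidem
end

section
/- For the d-th harmonic number H_d = Σ_{j=1}^d 1/j, the Shannon entropy of the probability distribution p_j = 1/(j·H_d), j = 1,…,d, is at most (log₂ d)/2 + log₂ log₂ d for all sufficiently large d. -/
/-!
Measured in nats, the entropy of `p_j = 1/(j H)` is `T/H + log H` with `T = ∑_{j ≤ d} log j / j`.
Bounding both factors of `(log (x+1))² - (log x)² = (log (x+1) - log x)(log (x+1) + log x)` by
`log y ≤ y - 1` shows that `log (x+1)/(x+1)` is at most the increment of
`(log x)²/2 - 1/(2x)`, so `T ≤ (log d)²/2 + 1/2` by telescoping. Together with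
`log d ≤ H ≤ 1 + log d` this gives an entropy of at most `(log d)/2 + log log d + 3/(2 log d)`,
while the target, in nats, is `(log d)/2 + log log d - log log 2` with `-log log 2 > 0.3`.
-/

open Real Finset

theorem neg_sum_one_div_mul_logb_one_div_eq {ι : Type*} (s : Finset ι) (a : ι → ℝ)
    (ha : ∀ j ∈ s, 0 < a j) (b : ℝ) :
    -(∑ j ∈ s, 1 / (a j * ∑ i ∈ s, 1 / a i) * logb b (1 / (a j * ∑ i ∈ s, 1 / a i))) =
      ((∑ j ∈ s, log (a j) / a j) / (∑ i ∈ s, 1 / a i) + log (∑ i ∈ s, 1 / a i)) / log b := by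
  set H := ∑ i ∈ s, 1 / a i with hH
  rcases s.eq_empty_or_nonempty with rfl | hs
  · simp [H]
  have hH0 : 0 < H := sum_pos (fun j hj => one_div_pos.mpr (ha j hj)) hs
  have hterm : ∀ j ∈ s, 1 / (a j * H) * logb b (1 / (a j * H)) =
      -((log (a j) / a j) / H + log H / H * (1 / a j)) / log b := by
    intro j hj
    rw [one_div (a j * H), logb_inv, logb, log_mul (ha j hj).ne' hH0.ne']
    ring
  rw [sum_congr rfl hterm, ← sum_div, sum_neg_distrib, sum_add_distrib, ← sum_div, ← mul_sum,
    ← hH, div_mul_cancel₀ _ hH0.ne']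
  ring

theorem log_add_one_div_add_one_le {x : ℝ} (hx : 1 ≤ x) :
    log (x + 1) / (x + 1) ≤
      (log (x + 1) ^ 2 / 2 - 1 / (2 * (x + 1))) - (log x ^ 2 / 2 - 1 / (2 * x)) := by
  have hx0 : 0 < x := by linarith
  have hgap_lb : 1 / (x + 1) ≤ log (x + 1) - log x := by
    have := one_sub_inv_le_log_of_pos (show 0 < (x + 1) / x by positivity)
    rw [log_div (by positivity) hx0.ne', inv_div] at this
    have e : 1 - x / (x + 1) = 1 / (x + 1) := by field_simp; ring
    linarith
  have hgap_ub : log (x + 1) - log x ≤ 1 / x := by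
    have := log_le_sub_one_of_pos (show 0 < (x + 1) / x by positivity)
    rw [log_div (by positivity) hx0.ne'] at this
    have e : (x + 1) / x - 1 = 1 / x := by field_simp; ring
    linarith
  have hsum_nonneg : 0 ≤ log (x + 1) + log x :=
    add_nonneg (log_nonneg (by linarith)) (log_nonneg hx)
  have hsq : (1 / (x + 1)) * (2 * log (x + 1) - 1 / x) ≤ log (x + 1) ^ 2 - log x ^ 2 := by
    calc (1 / (x + 1)) * (2 * log (x + 1) - 1 / x)
        ≤ (1 / (x + 1)) * (log (x + 1) + log x) := by gcongr; linarith
      _ ≤ (log (x + 1) - log x) * (log (x + 1) + log x) := by gcongr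
      _ = log (x + 1) ^ 2 - log x ^ 2 := by ring
  have e : (1 / (x + 1)) * (2 * log (x + 1) - 1 / x) =
      2 * (log (x + 1) / (x + 1)) - 2 * (1 / (2 * x) - 1 / (2 * (x + 1))) := by
    field_simp; ring
  linarith

theorem sum_Icc_log_div_le (d : ℕ) :
    ∑ j ∈ Icc 1 d, log j / j ≤ log d ^ 2 / 2 + 1 / 2 := by
  rcases Nat.eq_zero_or_pos d with rfl | hd
  · norm_num
  suffices h : ∑ j ∈ Icc 1 d, log j / j ≤ log d ^ 2 / 2 - 1 / (2 * d) + 1 / 2 by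
    have : 0 ≤ 1 / (2 * (d : ℝ)) := by positivity
    linarith
  induction d, hd using Nat.le_induction with
  | base => norm_num
  | succ n hn ih =>
    rw [sum_Icc_succ_top (by omega)]
    have := log_add_one_div_add_one_le (x := n) (by exact_mod_cast hn)
    push_cast
    linarith

theorem div_add_log_le_half_add_log {L H T : ℝ} (hL : 5 ≤ L) (hLH : L ≤ H) (hHL : H ≤ 1 + L)
    (hT0 : 0 ≤ T) (hT : T ≤ L ^ 2 / 2 + 1 / 2) :
    T / H + log H ≤ L / 2 + (log L - log (log 2)) := by
  have hL0 : 0 < L := by linarith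
  have hTH : T / H ≤ L / 2 + 1 / (2 * L) := calc
    T / H ≤ T / L := div_le_div_of_nonneg_left hT0 hL0 hLH
    _ ≤ (L ^ 2 / 2 + 1 / 2) / L := div_le_div_of_nonneg_right hT hL0.le
    _ = L / 2 + 1 / (2 * L) := by field_simp
  have hlogH : log H ≤ log L + 1 / L := calc
    log H ≤ log (1 + L) := log_le_log (by linarith) hHL
    _ = log L + log (1 + 1 / L) := by
      rw [← log_mul hL0.ne' (by positivity)]; congr 1; field_simp; ring
    _ ≤ log L + 1 / L := by linarith [log_le_sub_one_of_pos (show 0 < 1 + 1 / L by positivity)]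
  have hloglog2 : 3 / 10 ≤ -log (log 2) := by
    linarith [log_le_sub_one_of_pos (log_pos one_lt_two), log_two_lt_d9]
  have h3L : 1 / (2 * L) + 1 / L ≤ 3 / 10 := by
    rw [div_add_div _ _ (by positivity) hL0.ne', div_le_div_iff₀ (by positivity) (by norm_num)]
    nlinarith
  linarith

/-- For the harmonic number `H_d = Σ_{j=1}^d 1/j`, the Shannon entropy of the normalized
harmonic distribution `p_j = 1/(j·H_d)`, `j = 1,…,d`, is at most
`(log₂ d)/2 + log₂ log₂ d` for all sufficiently large `d`. -/
theorem harmonic_distribution_entropy_bound :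
    ∃ N : ℕ, ∀ d : ℕ, N ≤ d →
      -(∑ j ∈ Finset.Icc 1 d,
          (1 / ((j : ℝ) * ∑ i ∈ Finset.Icc 1 d, (1 : ℝ) / i)) *
            Real.logb 2 (1 / ((j : ℝ) * ∑ i ∈ Finset.Icc 1 d, (1 : ℝ) / i))) ≤
        Real.logb 2 d / 2 + Real.logb 2 (Real.logb 2 d) := by
  refine ⟨⌈exp 5⌉₊, fun d hd => ?_⟩
  have hd5 : exp 5 ≤ d := Nat.ceil_le.mp hd
  have hd0 : (0 : ℝ) < d := (exp_pos 5).trans_le hd5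
  have hL : 5 ≤ log d := (le_log_iff_exp_le hd0).mpr hd5
  have hH : ∑ i ∈ Icc 1 d, (1 : ℝ) / i = harmonic d := by
    simp [harmonic_eq_sum_Icc, one_div]
  have hLH : log d ≤ harmonic d :=
    (log_le_log hd0 (show (d : ℝ) ≤ (d + 1 : ℕ) by push_cast; linarith)).trans
      (by exact_mod_cast log_add_one_le_harmonic d)
  have hT0 : 0 ≤ ∑ j ∈ Icc 1 d, log j / (j : ℝ) :=
    sum_nonneg fun j _ => div_nonneg (log_natCast_nonneg j) j.cast_nonneg
  have hj0 : ∀ j ∈ Icc 1 d, (0 : ℝ) < j := fun j hj => by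
    have := (mem_Icc.mp hj).1; positivity
  rw [neg_sum_one_div_mul_logb_one_div_eq _ _ hj0, hH]
  simp only [logb]
  rw [log_div (by linarith) (log_pos one_lt_two).ne']
  calc _ ≤ (log d / 2 + (log (log d) - log (log 2))) / log 2 :=
        div_le_div_of_nonneg_right
          (div_add_log_le_half_add_log hL hLH (harmonic_le_one_add_log d) hT0
            (sum_Icc_log_div_le d))
          (log_pos one_lt_two).le
    _ = _ := by ring
end

section
/- Let |ψ⟩ = (1/√H_d) Σ_{j=1}^d (1/√j) |j⟩|ψ_j⟩|j⟩ on C₁⊗C₂⊗R where the |ψ_j⟩ are unit vectors with |⟨ψ_i|ψ_j⟩| ≤ α for i ≠ j and α ≥ 1/(2d). Then for λ = 2αd + 1 the operator λ·(I_{C₁} ⊗ ψ^R) − ψ^{C₁R} is positive semidefinite, where ψ^{C₁R} and ψ^R are the reduced states of |ψ⟩⟨ψ| on C₁⊗R and R; consequently −H_min(ψ^{C₁R}|ψ^R) ≤ log₂(αd) + 2. -/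
open scoped Kronecker ComplexOrder

/-- The min-entropy `H_min(ρ|σ) = −log₂ λ_min`, `λ_min` least `λ ≥ 0` with
`λ(I_A ⊗ σ) − ρ ≥ 0`. -/
noncomputable def Hmin {A B : Type*} [Fintype A] [Fintype B] [DecidableEq A]
    (ρ : Matrix (A × B) (A × B) ℂ) (σ : Matrix B B ℂ) : ℝ :=
  -Real.logb 2
    (sInf {l : ℝ | 0 ≤ l ∧ (l • ((1 : Matrix A A ℂ) ⊗ₖ σ) - ρ).PosSemidef})

/-- The partial trace over the first tensor factor. -/
noncomputable def ptraceFst {a b : Type*} [Fintype a]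
    (M : Matrix (a × b) (a × b) ℂ) : Matrix b b ℂ :=
  Matrix.of fun i j => ∑ k, M (k, i) (k, j)

open Matrix
open scoped InnerProductSpace

/-!
Write `aⱼ = 1 / √(H_d j)`. At a vector `x` of `C₁ ⊗ R`, the quadratic form of `ψ^{C₁R}` only sees
the diagonal entries: it equals `‖∑ⱼ yⱼ ψⱼ‖²` with `yⱼ = aⱼ conj (x (j, j))`, while `ψ^R` is
diagonal with entries `aⱼ²`, so the form of `I ⊗ ψ^R` is at least `∑ |yⱼ|²`. Expanding the norm,
the diagonal of the Gram matrix of the `ψⱼ` contributes `∑ |yⱼ|²` and the off-diagonal part at most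
`α (∑ |yⱼ|)² ≤ α d ∑ |yⱼ|²` (the Gershgorin bound). Hence `(1 + α d) (I ⊗ ψ^R) ≥ ψ^{C₁R}`, and
`λ_min ≤ 2 α d + 1 ≤ 4 α d` because `α d ≥ 1/2`.
-/

section Gram

variable {𝕜 E ι : Type*} [RCLike 𝕜] [NormedAddCommGroup E] [InnerProductSpace 𝕜 E] [Fintype ι]

theorem norm_sum_smul_sq_le_sum_norm_inner (ψ : ι → E) (y : ι → 𝕜) :
    ‖∑ j, y j • ψ j‖ ^ 2 ≤ ∑ i, ∑ j, ‖y i‖ * ‖y j‖ * ‖⟪ψ i, ψ j⟫_𝕜‖ := by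
  rw [← inner_self_eq_norm_sq (𝕜 := 𝕜), sum_inner]
  simp_rw [inner_sum, inner_smul_left, inner_smul_right]
  refine (RCLike.re_le_norm _).trans <| (norm_sum_le _ _).trans <|
    Finset.sum_le_sum fun i _ => (norm_sum_le _ _).trans_eq ?_
  simp [mul_assoc]

theorem norm_sum_smul_sq_le_of_norm_inner_le {ψ : ι → E} (hψ : ∀ j, ‖ψ j‖ = 1) {α : ℝ}
    (hα : 0 ≤ α) (hoverlap : ∀ i j, i ≠ j → ‖⟪ψ i, ψ j⟫_𝕜‖ ≤ α) (y : ι → 𝕜) :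
    ‖∑ j, y j • ψ j‖ ^ 2 ≤ (1 + α * Fintype.card ι) * ∑ j, ‖y j‖ ^ 2 := by
  classical
  have hterm (i j : ι) : ‖y i‖ * ‖y j‖ * ‖⟪ψ i, ψ j⟫_𝕜‖ ≤
      (if i = j then ‖y i‖ ^ 2 else 0) + α * (‖y i‖ * ‖y j‖) := by
    obtain rfl | hij := eq_or_ne i j
    · simp only [inner_self_eq_norm_sq_to_K, hψ, if_pos, RCLike.ofReal_one, one_pow, norm_one,
        mul_one, ← sq]
      exact le_add_of_nonneg_right (by positivity)
    · rw [if_neg hij, zero_add, mul_comm α]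
      exact mul_le_mul_of_nonneg_left (hoverlap i j hij) (by positivity)
  have hcs : (∑ i, ‖y i‖) ^ 2 ≤ Fintype.card ι * ∑ i, ‖y i‖ ^ 2 := sq_sum_le_card_mul_sum_sq
  calc ‖∑ j, y j • ψ j‖ ^ 2 ≤ ∑ i, ∑ j, ‖y i‖ * ‖y j‖ * ‖⟪ψ i, ψ j⟫_𝕜‖ :=
        norm_sum_smul_sq_le_sum_norm_inner ψ y
    _ ≤ ∑ i, ∑ j, ((if i = j then ‖y i‖ ^ 2 else 0) + α * (‖y i‖ * ‖y j‖)) := by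
        gcongr with i _ j _
        exact hterm i j
    _ = ∑ i, ‖y i‖ ^ 2 + α * (∑ i, ‖y i‖) ^ 2 := by
        simp [Finset.sum_add_distrib, ← Finset.mul_sum, sq, Finset.sum_mul_sum]
    _ ≤ (1 + α * Fintype.card ι) * ∑ j, ‖y j‖ ^ 2 := by nlinarith

end Gram

section PartialTrace

variable {a b : Type*} [Fintype a]

theorem isHermitian_ptraceFst {M : Matrix (a × b) (a × b) ℂ} (hM : M.IsHermitian) :
    (ptraceFst M).IsHermitian := by
  ext i j
  simp only [ptraceFst, conjTranspose_apply, of_apply, star_sum]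
  exact Finset.sum_congr rfl fun k _ => hM.apply (k, i) (k, j)

theorem ptraceFst_vecMulVec_self_star (v : a × b → ℂ) :
    ptraceFst (vecMulVec v (star v)) =
      ∑ k, vecMulVec (fun i => v (k, i)) (star fun i => v (k, i)) := by
  ext i j
  simp [ptraceFst, vecMulVec_apply, Matrix.sum_apply]

theorem dotProduct_ptraceFst_vecMulVec_mulVec [Fintype b] (v : a × b → ℂ) (x : b → ℂ) :
    star x ⬝ᵥ (ptraceFst (vecMulVec v (star v)) *ᵥ x) =
      ((∑ k, ‖star x ⬝ᵥ fun i => v (k, i)‖ ^ 2 : ℝ) : ℂ) := by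
  rw [ptraceFst_vecMulVec_self_star, sum_mulVec, dotProduct_sum, Complex.ofReal_sum]
  refine Finset.sum_congr rfl fun k _ => ?_
  have hstar : (star fun i => v (k, i)) ⬝ᵥ x = star (star x ⬝ᵥ fun i => v (k, i)) := by
    rw [star_dotProduct]
  rw [vecMulVec_mulVec, op_smul_eq_smul, dotProduct_smul, smul_eq_mul, hstar, mul_comm,
    Complex.star_def, Complex.mul_conj', Complex.ofReal_pow]

end PartialTrace

theorem dotProduct_one_kronecker_diagonal_mulVec {a b : Type*} [Fintype a] [DecidableEq a]
    [Fintype b] [DecidableEq b] (w : b → ℝ) (x : a × b → ℂ) :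
    star x ⬝ᵥ (((1 : Matrix a a ℂ) ⊗ₖ diagonal fun k => (w k : ℂ)) *ᵥ x) =
      ((∑ p, w p.2 * ‖x p‖ ^ 2 : ℝ) : ℂ) := by
  rw [← diagonal_one, diagonal_kronecker_diagonal, Complex.ofReal_sum]
  refine Finset.sum_congr rfl fun p _ => ?_
  rw [mulVec_diagonal, Pi.star_apply, Complex.star_def, one_mul, Complex.ofReal_mul,
    Complex.ofReal_pow, ← Complex.mul_conj']
  ring

section Embezzling

variable {ι κ : Type*} [Fintype ι] [DecidableEq ι] [Fintype κ]

/-- Coordinates are ordered `(C₂, (C₁, R))`, so that `ptraceFst` first traces out `C₂`, then `C₁`;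
the embezzling state has weights `a j = 1 / √(H_d (j + 1))`. -/
def embezzlingVector (a : ι → ℝ) (ψ : ι → κ → ℂ) : κ × (ι × ι) → ℂ := fun p =>
  if p.2.1 = p.2.2 then (a p.2.1 : ℂ) * ψ p.2.1 p.1 else 0

noncomputable def embezzlingMarginal (a : ι → ℝ) (ψ : ι → κ → ℂ) : Matrix (ι × ι) (ι × ι) ℂ :=
  ptraceFst (vecMulVec (embezzlingVector a ψ) (star (embezzlingVector a ψ)))

theorem ptraceFst_embezzlingMarginal (a : ι → ℝ) {ψ : ι → κ → ℂ}
    (hunit : ∀ j, ∑ c, ‖ψ j c‖ ^ 2 = 1) :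
    ptraceFst (embezzlingMarginal a ψ) = diagonal fun k => ((a k ^ 2 : ℝ) : ℂ) := by
  ext k k'
  simp only [embezzlingMarginal, ptraceFst, embezzlingVector, of_apply, vecMulVec_apply,
    Pi.star_apply, diagonal_apply]
  obtain rfl | hk := eq_or_ne k k'
  · rw [Finset.sum_eq_single k (fun j _ hj => by simp [hj]) (by simp)]
    simp only [↓reduceIte, star_mul', Complex.star_def, Complex.conj_ofReal]
    rw [← mul_one ((a k ^ 2 : ℝ) : ℂ), ← Complex.ofReal_one, ← hunit k, Complex.ofReal_sum,
      Finset.mul_sum]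
    refine Finset.sum_congr rfl fun c _ => ?_
    rw [Complex.ofReal_pow, Complex.ofReal_pow, ← Complex.mul_conj']
    ring
  · simp [hk]

theorem isHermitian_embezzlingMarginal (a : ι → ℝ) (ψ : ι → κ → ℂ) :
    (embezzlingMarginal a ψ).IsHermitian :=
  isHermitian_ptraceFst (posSemidef_vecMulVec_self_star _).1

theorem dotProduct_embezzlingMarginal_mulVec (a : ι → ℝ) (ψ : ι → κ → ℂ) (x : ι × ι → ℂ) :
    star x ⬝ᵥ (embezzlingMarginal a ψ *ᵥ x) =
      ((‖∑ j, (star (x (j, j)) * a j) • WithLp.toLp 2 (ψ j)‖ ^ 2 : ℝ) : ℂ) := by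
  rw [embezzlingMarginal, dotProduct_ptraceFst_vecMulVec_mulVec, EuclideanSpace.norm_sq_eq]
  congr! 3 with c
  simp [dotProduct, Fintype.sum_prod_type, embezzlingVector, mul_assoc]

theorem posSemidef_one_kronecker_ptraceFst_embezzlingMarginal (a : ι → ℝ) {ψ : ι → κ → ℂ}
    (hunit : ∀ j, ∑ c, ‖ψ j c‖ ^ 2 = 1) :
    ((1 : Matrix ι ι ℂ) ⊗ₖ ptraceFst (embezzlingMarginal a ψ)).PosSemidef := by
  rw [ptraceFst_embezzlingMarginal a hunit]
  exact PosSemidef.one.kronecker (.diagonal fun k => Complex.zero_le_real.2 (sq_nonneg (a k)))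

theorem posSemidef_smul_one_kronecker_sub_embezzlingMarginal (a : ι → ℝ) {ψ : ι → κ → ℂ}
    (hunit : ∀ j, ∑ c, ‖ψ j c‖ ^ 2 = 1) {α : ℝ} (hα : 0 ≤ α)
    (hoverlap : ∀ i j, i ≠ j → ‖∑ c, (starRingEnd ℂ) (ψ i c) * ψ j c‖ ≤ α) :
    ((1 + α * Fintype.card ι) • ((1 : Matrix ι ι ℂ) ⊗ₖ ptraceFst (embezzlingMarginal a ψ)) -
      embezzlingMarginal a ψ).PosSemidef := by
  set e : ι → EuclideanSpace ℂ κ := fun j => WithLp.toLp 2 (ψ j)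
  have he (j : ι) : ‖e j‖ = 1 := by simp [e, EuclideanSpace.norm_eq, hunit]
  have he_overlap (i j : ι) (hij : i ≠ j) : ‖⟪e i, e j⟫_ℂ‖ ≤ α := by
    simpa [e, EuclideanSpace.inner_toLp_toLp, dotProduct, mul_comm] using hoverlap i j hij
  have hdiag (x : ι × ι → ℂ) :
      ∑ j, ‖star (x (j, j)) * a j‖ ^ 2 ≤ ∑ p : ι × ι, a p.2 ^ 2 * ‖x p‖ ^ 2 := by
    rw [Fintype.sum_prod_type]
    refine Finset.sum_le_sum fun j _ => ?_
    refine le_of_eq_of_le ?_ (Finset.single_le_sum (f := fun k => a k ^ 2 * ‖x (j, k)‖ ^ 2)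
      (fun k _ => by positivity) (Finset.mem_univ j))
    simp [mul_pow, mul_comm]
  rw [posSemidef_iff_dotProduct_mulVec]
  refine ⟨((posSemidef_one_kronecker_ptraceFst_embezzlingMarginal a hunit).1.smul
    (.all _)).sub (isHermitian_embezzlingMarginal a ψ), fun x => ?_⟩
  rw [ptraceFst_embezzlingMarginal a hunit, sub_mulVec, dotProduct_sub, smul_mulVec,
    dotProduct_smul, dotProduct_one_kronecker_diagonal_mulVec,
    dotProduct_embezzlingMarginal_mulVec, Complex.real_smul, ← Complex.ofReal_mul,
    ← Complex.ofReal_sub, Complex.zero_le_real, sub_nonneg]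
  calc ‖∑ j, (star (x (j, j)) * a j) • e j‖ ^ 2
      ≤ (1 + α * Fintype.card ι) * ∑ j, ‖star (x (j, j)) * a j‖ ^ 2 :=
        norm_sum_smul_sq_le_of_norm_inner_le he hα he_overlap _
    _ ≤ (1 + α * Fintype.card ι) * ∑ p : ι × ι, a p.2 ^ 2 * ‖x p‖ ^ 2 := by
        gcongr
        exact hdiag x

end Embezzling

theorem neg_Hmin_le_logb_of_posSemidef {A B : Type*} [Fintype A] [Fintype B] [DecidableEq A]
    {ρ : Matrix (A × B) (A × B) ℂ} {σ : Matrix B B ℂ} {l : ℝ} (hl : 1 ≤ l)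
    (h : (l • ((1 : Matrix A A ℂ) ⊗ₖ σ) - ρ).PosSemidef) :
    -Hmin ρ σ ≤ Real.logb 2 l := by
  set S := {l : ℝ | 0 ≤ l ∧ (l • ((1 : Matrix A A ℂ) ⊗ₖ σ) - ρ).PosSemidef}
  have hle : sInf S ≤ l := csInf_le ⟨0, fun _ h => h.1⟩ ⟨by linarith, h⟩
  have hnonneg : 0 ≤ sInf S := le_csInf ⟨l, by linarith, h⟩ fun _ h => h.1
  rw [Hmin, neg_neg]
  rcases le_or_gt (sInf S) 1 with h1 | h1
  · exact (Real.logb_nonpos one_lt_two hnonneg h1).trans (Real.logb_nonneg one_lt_two hl)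
  · exact Real.logb_le_logb_of_le one_lt_two (by linarith) hle

theorem logb_two_mul_add_one_le_logb_add_two {t : ℝ} (ht : 1 ≤ 2 * t) :
    Real.logb 2 (2 * t + 1) ≤ Real.logb 2 t + 2 := by
  calc Real.logb 2 (2 * t + 1) ≤ Real.logb 2 (2 ^ 2 * t) :=
        Real.logb_le_logb_of_le one_lt_two (by linarith) (by linarith)
    _ = Real.logb 2 t + 2 := by
        rw [Real.logb_mul (by positivity) (by linarith), Real.logb_pow,
          Real.logb_self_eq_one one_lt_two]
        ring

/-- Let `|ψ⟩ = (1/√H_d) Σ_j (1/√j)|j⟩^{C₁}|ψ_j⟩^{C₂}|j⟩^{R}` with the `|ψ_j⟩` unit vectors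
satisfying `|⟨ψ_i|ψ_j⟩| ≤ α` for `i ≠ j` and `α ≥ 1/(2d)`.  Then for `λ = 2αd + 1` the
operator `λ·(I_{C₁} ⊗ ψ^R) − ψ^{C₁R}` is positive semidefinite, and consequently
`−H_min(ψ^{C₁R}|ψ^R) ≤ log₂(αd) + 2`. -/
theorem embezzling_state_hmin_bound {d m : ℕ} (hd : 1 ≤ d)
    (ψ : Fin d → Fin m → ℂ)
    (hunit : ∀ j, ∑ c, ‖ψ j c‖ ^ 2 = 1)
    (α : ℝ) (hα : 1 / (2 * (d : ℝ)) ≤ α)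
    (hoverlap : ∀ i j, i ≠ j → ‖∑ c, (starRingEnd ℂ) (ψ i c) * ψ j c‖ ≤ α) :
    let Hd : ℝ := ∑ i ∈ Finset.Icc 1 d, (1 : ℝ) / i
    let v : Fin m × (Fin d × Fin d) → ℂ := fun p =>
      if p.2.1 = p.2.2 then
        ((Real.sqrt (Hd * ((p.2.1 : ℕ) + 1)))⁻¹ : ℝ) * ψ p.2.1 p.1
      else 0
    let ρ : Matrix (Fin m × (Fin d × Fin d)) (Fin m × (Fin d × Fin d)) ℂ :=
      Matrix.vecMulVec v (star v)
    let ψC1R : Matrix (Fin d × Fin d) (Fin d × Fin d) ℂ := ptraceFst ρ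
    let ψR : Matrix (Fin d) (Fin d) ℂ := ptraceFst ψC1R
    (((2 * α * (d : ℝ) + 1) • ((1 : Matrix (Fin d) (Fin d) ℂ) ⊗ₖ ψR) -
        ψC1R).PosSemidef) ∧
      -Hmin ψC1R ψR ≤ Real.logb 2 (α * d) + 2 := by
  intro Hd v ρ ψC1R ψR
  set a : Fin d → ℝ := fun j => (Real.sqrt (Hd * ((j : ℕ) + 1)))⁻¹
  have hd_pos : (0 : ℝ) < d := by exact_mod_cast hd
  have hα0 : 0 ≤ α := le_trans (by positivity) hα
  have hαd : 1 ≤ 2 * (α * d) := by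
    have := (div_le_iff₀ (by positivity)).1 hα
    linarith
  have hPSD : ((2 * α * d + 1) • ((1 : Matrix (Fin d) (Fin d) ℂ) ⊗ₖ
      ptraceFst (embezzlingMarginal a ψ)) - embezzlingMarginal a ψ).PosSemidef := by
    convert (posSemidef_smul_one_kronecker_sub_embezzlingMarginal a hunit hα0 hoverlap).add
      ((posSemidef_one_kronecker_ptraceFst_embezzlingMarginal a hunit).smul
        (mul_nonneg hα0 hd_pos.le)) using 1
    rw [Fintype.card_fin]
    module
  refine ⟨hPSD, (neg_Hmin_le_logb_of_posSemidef (by linarith) hPSD).trans ?_⟩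
  simpa only [mul_assoc] using logb_two_mul_add_one_le_logb_add_two hαd
end
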